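/- arXiv:math/9907201 — 7 statements merged into one kernel-verified Lean document; each statement's English description precedes it below -/
import Mathlib

section
/- Let S be a set, G a commutative monoid, d ≥ 0, and φ : {a : Finset S | a.card ≤ d} → G any function. Define P : Finset S → G by P(n) = Σ_{a ⊆ n, |a| ≤ d} φ(a). Then P is a polynomial mapping of degree ≤ d: for every finite m ⊆ S there exists a mapping D_m P : Finset (S \ m) → G of degree ≤ d−1 such that P(n ∪ m) = P(n) + (D_m P)(n) for all finite n ⊆ S with n ∩ m = ∅. -/
/-!
Write every `a ⊆ n ∪ m` (with `n`, `m` disjoint) as `b ∪ c`, `b ⊆ n`, `c ⊆ m`. The terms with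
`c = ∅` sum to `P n`; the others regroup as `∑ b ⊆ n, |b| ≤ d, ψ b` with
`ψ b = ∑ ∅ ≠ c ⊆ m, |b| + |c| ≤ d + 1, φ (b ∪ c)`, a sum of the same shape one degree lower,
so induction on `d`, over all ground sets `U ⊆ S` at once, applies.
-/

/-- `PolyOn d P U` : `P` is a polynomial mapping of degree `≤ d` on the ground set `U ⊆ S`.
Degree `≤ 0` means constant; degree `≤ d+1` means that for every finite `m ⊆ U` there is a
polynomial mapping `D_m P` of degree `≤ d` on `U \ m` with
`P(n ∪ m) = P(n) + (D_m P)(n)` for all finite `n ⊆ U` disjoint from `m`. -/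
def PolyOn {S : Type*} [DecidableEq S] {G : Type*} [AddCommMonoid G] :
    ℕ → (Finset S → G) → Set S → Prop
  | 0, P, U => ∀ n m : Finset S, ↑n ⊆ U → ↑m ⊆ U → P n = P m
  | d + 1, P, U => ∀ m : Finset S, ↑m ⊆ U →
      ∃ Q : Finset S → G, PolyOn d Q (U \ ↑m) ∧
        ∀ n : Finset S, ↑n ⊆ U → Disjoint n m → P (n ∪ m) = P n + Q n

open Finset

namespace Finset

variable {α M : Type*} [DecidableEq α] [AddCommMonoid M]

theorem sum_powerset_union_of_disjoint {s t : Finset α} (hst : Disjoint s t)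
    (f : Finset α → M) :
    ∑ a ∈ (s ∪ t).powerset, f a = ∑ b ∈ s.powerset, ∑ c ∈ t.powerset, f (b ∪ c) := by
  have hinj : Set.InjOn (Function.uncurry (· ⊔ ·))
      (↑(s.powerset ×ˢ t.powerset) : Set (Finset α × Finset α)) := by
    rintro ⟨b, c⟩ hbc ⟨b', c'⟩ hbc' heq
    simp only [coe_product, Set.mem_prod, mem_coe, mem_powerset, subset_iff] at hbc hbc'
    simp only [Function.uncurry_apply_pair, sup_eq_union, Finset.ext_iff, mem_union] at heq
    rw [disjoint_left] at hst
    simp only [Prod.mk.injEq, Finset.ext_iff]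
    grind
  rw [powerset_union, ← image_sup_product, sum_image hinj, sum_product]
  rfl

end Finset

section SmallSubsetSum

variable {S G : Type*} [DecidableEq S] [AddCommMonoid G]

def smallSubsetSum (d : ℕ) (φ : Finset S → G) (n : Finset S) : G :=
  ∑ a ∈ n.powerset with #a ≤ d, φ a

def unionCoeff (d : ℕ) (φ : Finset S → G) (m b : Finset S) : G :=
  ∑ c ∈ m.powerset.erase ∅ with #b + #c ≤ d + 1, φ (b ∪ c)

theorem smallSubsetSum_zero (φ : Finset S → G) (n : Finset S) :
    smallSubsetSum 0 φ n = φ ∅ := by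
  have : n.powerset.filter (#· ≤ 0) = {∅} := by
    ext a
    simp +contextual [iff_def]
  rw [smallSubsetSum, this, sum_singleton]

theorem smallSubsetSum_succ_union (d : ℕ) (φ : Finset S → G) {n m : Finset S}
    (hnm : Disjoint n m) :
    smallSubsetSum (d + 1) φ (n ∪ m) =
      smallSubsetSum (d + 1) φ n + smallSubsetSum d (unionCoeff d φ m) n := by
  calc smallSubsetSum (d + 1) φ (n ∪ m)
      = ∑ b ∈ n.powerset, ∑ c ∈ m.powerset, if #b + #c ≤ d + 1 then φ (b ∪ c) else 0 := by
        rw [smallSubsetSum, sum_filter, sum_powerset_union_of_disjoint hnm]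
        refine sum_congr rfl fun b hb => sum_congr rfl fun c hc => ?_
        rw [card_union_of_disjoint (hnm.mono (mem_powerset.1 hb) (mem_powerset.1 hc))]
    _ = ∑ b ∈ n.powerset, ((if #b ≤ d + 1 then φ b else 0) + unionCoeff d φ m b) := by
        refine sum_congr rfl fun b _ => ?_
        rw [← add_sum_erase _ _ (empty_mem_powerset m), unionCoeff, sum_filter, card_empty,
          add_zero, union_empty]
    _ = smallSubsetSum (d + 1) φ n + ∑ b ∈ n.powerset, unionCoeff d φ m b := by
        rw [sum_add_distrib, smallSubsetSum, sum_filter]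
    _ = smallSubsetSum (d + 1) φ n + smallSubsetSum d (unionCoeff d φ m) n := by
        congr 1
        rw [smallSubsetSum, sum_filter_of_ne]
        intro b _ hb
        obtain ⟨c, hc, -⟩ := exists_ne_zero_of_sum_ne_zero hb
        simp only [mem_filter, mem_erase, ← nonempty_iff_ne_empty] at hc
        have := hc.1.1.card_pos
        omega

theorem polyOn_smallSubsetSum (d : ℕ) (φ : Finset S → G) (U : Set S) :
    PolyOn d (smallSubsetSum d φ) U := by
  induction d generalizing φ U with
  | zero => intro n m _ _; simp only [smallSubsetSum_zero]
  | succ d ih =>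
    intro m _
    exact ⟨_, ih (unionCoeff d φ m) _, fun n _ hnm => smallSubsetSum_succ_union d φ hnm⟩

end SmallSubsetSum

/-- The mapping `P(n) = Σ_{a ⊆ n, |a| ≤ d} φ(a)` is a polynomial mapping of degree `≤ d`. -/
theorem sum_over_small_subsets_isPoly {S : Type*} [DecidableEq S] {G : Type*} [AddCommMonoid G]
    (d : ℕ) (φ : Finset S → G) (P : Finset S → G)
    (hP : ∀ n : Finset S, P n = ∑ a ∈ n.powerset.filter (fun a => a.card ≤ d), φ a) :
    PolyOn d P Set.univ := by
  obtain rfl : P = smallSubsetSum d φ := funext hP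
  exact polyOn_smallSubsetSum d φ _
end

section
/- Let S be a linearly ordered set, G a commutative group, d ≥ 0, and P : Finset S → G a polynomial mapping of degree ≤ d. Then there exists a function φ : {a : Finset S | a.card ≤ d} → G such that P(n) = Σ_{a ⊆ n, |a| ≤ d} φ(a) for all finite n ⊆ S. -/
/-- Alternating-sum alternating difference (Möbius transform) of `P` at `a`. -/
def altSum {S : Type*} [DecidableEq S] {G : Type*} [AddCommGroup G]
    (P : Finset S → G) (a : Finset S) : G :=
  ∑ b ∈ a.powerset, ((-1 : ℤ) ^ (a \ b).card) • P b

lemma alt_sum_neg_one_pow {S : Type*} [DecidableEq S] (a : Finset S) (ha : a.Nonempty) :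
    ∑ b ∈ a.powerset, ((-1 : ℤ) ^ (a \ b).card) = 0 := by
  have h : ∑ b ∈ a.powerset, ((-1 : ℤ) ^ (a \ b).card)
      = ∑ b ∈ a.powerset, ((-1 : ℤ) ^ b.card) := by
    refine Finset.sum_nbij' (fun b => a \ b) (fun b => a \ b) ?_ ?_ ?_ ?_ ?_
    · intro b hb; simp
    · intro b hb; simp
    · intro b hb
      exact Finset.sdiff_sdiff_eq_self (Finset.mem_powerset.1 hb)
    · intro b hb
      exact Finset.sdiff_sdiff_eq_self (Finset.mem_powerset.1 hb)
    · intro b hb; rfl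
  rw [h, Finset.sum_powerset_neg_one_pow_card, if_neg ha.ne_empty]

/-- Möbius inversion: summing `altSum P` over all subsets recovers `P`. -/
lemma mobius {S : Type*} [DecidableEq S] {G : Type*} [AddCommGroup G]
    (P : Finset S → G) (n : Finset S) :
    ∑ a ∈ n.powerset, altSum P a = P n := by
  unfold altSum
  rw [Finset.sum_comm' (s' := fun b => n.powerset.filter (fun a => b ⊆ a)) (t' := n.powerset)
    (f := fun a b => ((-1 : ℤ) ^ (a \ b).card) • P b)]
  · have key : ∀ b ∈ n.powerset,
        (∑ a ∈ n.powerset.filter (fun a => b ⊆ a), ((-1 : ℤ) ^ (a \ b).card) • P b)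
          = (if b = n then (1:ℤ) else 0) • P b := by
      intro b hb
      rw [← Finset.sum_smul]
      congr 1
      have : ∑ a ∈ n.powerset.filter (fun a => b ⊆ a), ((-1 : ℤ) ^ (a \ b).card)
          = ∑ c ∈ (n \ b).powerset, ((-1 : ℤ) ^ c.card) := by
        refine Finset.sum_nbij' (fun a => a \ b) (fun c => c ∪ b) ?_ ?_ ?_ ?_ ?_
        · intro a ha
          simp only [Finset.mem_filter, Finset.mem_powerset] at ha ⊢
          exact Finset.sdiff_subset_sdiff ha.1 le_rfl
        · intro c hc
          simp only [Finset.mem_filter, Finset.mem_powerset] at hc ⊢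
          constructor
          · exact Finset.union_subset (hc.trans Finset.sdiff_subset) (Finset.mem_powerset.1 hb)
          · exact Finset.subset_union_right
        · intro a ha
          simp only [Finset.mem_filter, Finset.mem_powerset] at ha
          exact Finset.sdiff_union_of_subset ha.2
        · intro c hc
          simp only [Finset.mem_powerset] at hc
          have hdisj : Disjoint c b := (Finset.sdiff_disjoint.mono_left hc)
          exact Finset.union_sdiff_cancel_right hdisj
        · intro a ha; rfl
      rw [this, Finset.sum_powerset_neg_one_pow_card]
      have : n \ b = ∅ ↔ b = n := by
        rw [Finset.sdiff_eq_empty_iff_subset]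
        constructor
        · intro h; exact le_antisymm (Finset.mem_powerset.1 hb) h
        · intro h; rw [h]
      simp only [this]
    rw [Finset.sum_congr rfl key]
    simp
  · intro a b
    simp only [Finset.mem_powerset, Finset.mem_filter, Finset.mem_powerset]
    constructor
    · rintro ⟨h1, h2⟩; exact ⟨⟨h1, h2⟩, h2.trans h1⟩
    · rintro ⟨⟨h1, h2⟩, h3⟩; exact ⟨h1, h2⟩

/-- Key vanishing: if `P` is polynomial of degree `≤ d` on `U`, then `altSum P a = 0`
for every `a ⊆ U` with more than `d` elements. -/
lemma altSum_eq_zero {S : Type*} [DecidableEq S] {G : Type*} [AddCommGroup G] :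
    ∀ (d : ℕ) (P : Finset S → G) (U : Set S), PolyOn d P U →
      ∀ a : Finset S, ↑a ⊆ U → d < a.card → altSum P a = 0 := by
  intro d
  induction d with
  | zero =>
    intro P U hP a haU hcard
    have ha : a.Nonempty := Finset.card_pos.1 hcard
    have hconst : ∀ b ∈ a.powerset, ((-1 : ℤ) ^ (a \ b).card) • P b
        = ((-1 : ℤ) ^ (a \ b).card) • P ∅ := by
      intro b hb
      congr 1
      exact hP b ∅ ((Finset.coe_subset.2 (Finset.mem_powerset.1 hb)).trans haU) (by simp)
    unfold altSum
    rw [Finset.sum_congr rfl hconst, ← Finset.sum_smul, alt_sum_neg_one_pow a ha, zero_smul]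
  | succ d ih =>
    intro P U hP a haU hcard
    have ha : a.Nonempty := Finset.card_pos.1 (Nat.lt_of_le_of_lt (Nat.zero_le _) hcard)
    obtain ⟨x, hx⟩ := ha
    have hxU : (↑({x} : Finset S) : Set S) ⊆ U := by
      simp only [Finset.coe_singleton, Set.singleton_subset_iff]
      exact haU hx
    obtain ⟨Q, hQ, hPQ⟩ := hP {x} hxU
    set a' := a.erase x with ha'
    have hxa' : x ∉ a' := Finset.notMem_erase x a
    have hins : a = insert x a' := (Finset.insert_erase hx).symm
    have ha'U : ∀ b ∈ a'.powerset, (↑b : Set S) ⊆ U := by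
      intro b hb
      exact (Finset.coe_subset.2 ((Finset.mem_powerset.1 hb).trans
        (Finset.erase_subset x a))).trans haU
    unfold altSum
    rw [hins, Finset.sum_powerset_insert hxa']
    have h1 : ∀ b ∈ a'.powerset,
        ((-1 : ℤ) ^ ((insert x a') \ b).card) • P b
          = -(((-1 : ℤ) ^ (a' \ b).card) • P b) := by
      intro b hb
      have hxb : x ∉ b := fun h => hxa' ((Finset.mem_powerset.1 hb) h)
      have : (insert x a') \ b = insert x (a' \ b) := by
        rw [Finset.insert_sdiff_of_notMem _ hxb]
      rw [this, Finset.card_insert_of_notMem (by simp [hxa'])]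
      rw [pow_succ, ← neg_smul]
      ring_nf
    have h2 : ∀ b ∈ a'.powerset,
        ((-1 : ℤ) ^ ((insert x a') \ (insert x b)).card) • P (insert x b)
          = ((-1 : ℤ) ^ (a' \ b).card) • (P b + Q b) := by
      intro b hb
      have hxb : x ∉ b := fun h => hxa' ((Finset.mem_powerset.1 hb) h)
      have hd : Disjoint b ({x} : Finset S) := by
        simp [Finset.disjoint_singleton_right, hxb]
      have hPb : P (insert x b) = P b + Q b := by
        have := hPQ b (ha'U b hb) hd
        rwa [show b ∪ ({x} : Finset S) = insert x b from by ext y; simp [or_comm]] at this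
      have hset : (insert x a') \ (insert x b) = a' \ b := by
        ext y
        simp only [Finset.mem_sdiff, Finset.mem_insert, not_or]
        constructor
        · rintro ⟨h1 | h1, h2, h3⟩
          · exact absurd h1 h2
          · exact ⟨h1, h3⟩
        · rintro ⟨h1, h2⟩
          exact ⟨Or.inr h1, fun h => hxa' (h ▸ h1), h2⟩
      rw [hset, hPb]
    rw [Finset.sum_congr rfl h1, Finset.sum_congr rfl h2]
    simp only [smul_add]
    rw [Finset.sum_add_distrib, Finset.sum_neg_distrib]
    have hQ0 : ∑ b ∈ a'.powerset, ((-1 : ℤ) ^ (a' \ b).card) • Q b = 0 := by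
      have ha'U' : (↑a' : Set S) ⊆ U \ ↑({x} : Finset S) := by
        intro y hy
        simp only [Finset.coe_singleton, Set.mem_diff, Set.mem_singleton_iff]
        refine ⟨haU (Finset.mem_coe.1 (Finset.mem_of_mem_erase (by exact_mod_cast hy))), ?_⟩
        intro h
        exact hxa' (h ▸ (by exact_mod_cast hy))
      have hcard' : d < a'.card := by
        have : a'.card = a.card - 1 := Finset.card_erase_of_mem hx
        omega
      exact ih Q (U \ ↑({x} : Finset S)) hQ a' ha'U' hcard'
    rw [hQ0]
    abel

/-- Every polynomial mapping `P : Finset S → G` of degree `≤ d` into a commutative group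
has the form `P(n) = Σ_{a ⊆ n, |a| ≤ d} φ(a)` for a suitable `φ`. -/
theorem poly_eq_sum_over_small_subsets {S : Type*} [LinearOrder S] {G : Type*} [AddCommGroup G]
    (d : ℕ) (P : Finset S → G) (hP : PolyOn d P Set.univ) :
    ∃ φ : Finset S → G, ∀ n : Finset S,
      P n = ∑ a ∈ n.powerset.filter (fun a => a.card ≤ d), φ a := by
  refine ⟨altSum P, fun n => ?_⟩
  rw [Finset.sum_filter_of_ne, mobius]
  intro a ha hne
  by_contra h
  exact hne (altSum_eq_zero d P Set.univ hP a (by simp) (by omega))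
end

section
/- Assume: for every r ∈ ℕ there exists N ∈ ℕ such that for any r-coloring χ of finite subsets of ℕ×ℕ there are a nonempty γ ⊆ {1,…,N} and finite a with a ∩ (γ×γ) = ∅ and χ(a) = χ(a ∪ (γ×γ)). Then for every finite coloring of ℕ there exist x, y ∈ ℕ of the same color and n ∈ ℕ, n ≥ 1, with x − y = n². -/
/-! Colour a finite set of lattice points by the colour of its cardinality. Adding the square
`γ ×ˢ γ` to a disjoint set raises its cardinality by `|γ|²`, so the monochromatic pair
`a`, `a ∪ γ ×ˢ γ` yields two equally coloured numbers differing by a nonzero square. -/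

theorem Finset.card_union_product_self_of_disjoint {α : Type*} [DecidableEq α]
    {a : Finset (α × α)} {γ : Finset α} (h : Disjoint a (γ ×ˢ γ)) :
    (a ∪ γ ×ˢ γ).card = a.card + γ.card ^ 2 := by
  rw [Finset.card_union_of_disjoint h, Finset.card_product, sq]

/-- Remark after Proposition Q: the chromatic "single square" statement implies that for
every finite coloring of `ℕ` there are monochromatic `x, y` with `x - y = n²`, `n ≥ 1`. -/
theorem square_difference_monochromatic
    (H : ∀ r : ℕ, ∃ N : ℕ, ∀ χ : Finset (ℕ × ℕ) → Fin r,
      ∃ γ : Finset ℕ, γ.Nonempty ∧ γ ⊆ Finset.Icc 1 N ∧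
        ∃ a : Finset (ℕ × ℕ), Disjoint a (γ ×ˢ γ) ∧ χ a = χ (a ∪ γ ×ˢ γ)) :
    ∀ (r : ℕ) (χ : ℕ → Fin r), ∃ x y n : ℕ, 1 ≤ n ∧ χ x = χ y ∧ x = y + n ^ 2 := by
  intro r χ
  obtain ⟨N, hN⟩ := H r
  obtain ⟨γ, hγ, -, a, hdisj, hχ⟩ := hN fun s => χ s.card
  exact ⟨(a ∪ γ ×ˢ γ).card, a.card, γ.card, hγ.card_pos, hχ.symm,
    Finset.card_union_product_self_of_disjoint hdisj⟩
end

section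
/- Assume the polynomial Hales–Jewett theorem: for any r, d, q ∈ ℕ there exists N such that, with V = {1,…,N}^d × {1,…,q}, for every r-coloring of Finset V there exist a ⊆ V and a nonempty γ ⊆ {1,…,N} with a ∩ (γ^d × {1,…,q}) = ∅ such that a, a ∪ (γ^d×{1}), …, a ∪ (γ^d×{q}) all have the same color. Then for every finite coloring of ℤ and all d, q ∈ ℕ there exist a ∈ ℤ and n ≥ 1 such that a, a+n^d, a+2n^d, …, a+q·n^d are all of the same color. -/
/-!
Colour a finite set `s ⊆ ℕ^d × ℕ` by the colour of its level weight `∑_{(x, i) ∈ s} i`, which is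
`∑ i · |s_i|` in the paper's notation. Adjoining the disjoint layer `γ^d × {i}` raises the weight
by `i · |γ|^d`, so the monochromatic configuration given by the polynomial Hales–Jewett theorem
becomes a monochromatic progression with base the weight of `a` and difference `|γ|^d`.
-/

open Finset

def levelWeight {α : Type*} (s : Finset (α × ℕ)) : ℕ := ∑ p ∈ s, p.2

lemma levelWeight_union_product_singleton {α : Type*} [DecidableEq α] {a : Finset (α × ℕ)}
    {b : Finset α} {i : ℕ} (h : Disjoint a (b ×ˢ {i})) :
    levelWeight (a ∪ b ×ˢ {i}) = levelWeight a + i * #b := by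
  rw [levelWeight, levelWeight, sum_union h, sum_product]
  simp [mul_comm]

/-- The polynomial Hales–Jewett theorem implies: for every finite coloring of `ℤ` and all
`d, q`, there are a monochromatic arithmetic progression `a, a+n^d, …, a+q·n^d` with
common difference a perfect `d`-th power `n^d`, `n ≥ 1`. -/
theorem PHJ_implies_power_progressions
    (PHJ : ∀ r d q : ℕ, ∃ N : ℕ, ∀ χ : Finset ((Fin d → ℕ) × ℕ) → Fin r,
      ∃ (a : Finset ((Fin d → ℕ) × ℕ)) (γ : Finset ℕ),
        γ.Nonempty ∧ γ ⊆ Finset.Icc 1 N ∧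
        a ⊆ (Fintype.piFinset fun _ : Fin d => Finset.Icc 1 N) ×ˢ Finset.Icc 1 q ∧
        Disjoint a ((Fintype.piFinset fun _ : Fin d => γ) ×ˢ Finset.Icc 1 q) ∧
        ∀ i ∈ Finset.Icc 1 q,
          χ (a ∪ (Fintype.piFinset fun _ : Fin d => γ) ×ˢ {i}) = χ a) :
    ∀ (r : ℕ) (χ : ℤ → Fin r) (d q : ℕ),
      ∃ (a : ℤ) (n : ℕ), 1 ≤ n ∧
        ∀ i : ℕ, i ≤ q → χ (a + (i : ℤ) * (n : ℤ) ^ d) = χ a := by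
  intro r χ d q
  obtain ⟨N, hN⟩ := PHJ r d q
  obtain ⟨a, γ, hγ, -, -, hdisj, hmono⟩ := hN fun s => χ (levelWeight s)
  refine ⟨levelWeight a, #γ, hγ.card_pos, fun i hiq => ?_⟩
  rcases Nat.eq_zero_or_pos i with rfl | hi0
  · simp
  have hi : i ∈ Icc 1 q := mem_Icc.2 ⟨hi0, hiq⟩
  have hlayer := hmono i hi
  rw [levelWeight_union_product_singleton
    (hdisj.mono_right (product_subset_product_right (singleton_subset_iff.2 hi)))] at hlayer
  simpa [Fintype.card_piFinset_const] using hlayer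
end

section
/- Let S be a set, D ≥ 1, and let P, Q be set-polynomials Finset S → Finset(S^D). If n ⊆ S is a finite set with n ∩ supp(Q) = ∅, then for any finite m ⊆ S, P(n) ∩ Q(m) ⊆ P(n ∩ m). -/
/-- A set-polynomial on `S` with values in `Finset (S^D)`, given by its coefficients:
for each `α ⊆ {1,…,D}`, a finite set of tuples indexed by the complement of `α`. -/
structure SetPolynomial (S : Type*) (D : ℕ) where
  coeff : (α : Finset (Fin D)) → Finset ({i : Fin D // i ∉ α} → S)

namespace SetPolynomial

variable {S : Type*} {D : ℕ}

/-- Evaluation of a set-polynomial: `P(n)` is the union over `α ⊆ {1,…,D}` of the set of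
`D`-tuples `s` whose restriction to the complement of `α` lies in the coefficient `P_α`
and whose coordinates in `α` all lie in `n`. -/
def eval [DecidableEq S] (P : SetPolynomial S D) (n : Finset S) : Finset (Fin D → S) :=
  Finset.univ.biUnion fun α : Finset (Fin D) =>
    (P.coeff α ×ˢ Fintype.piFinset fun _ : {i : Fin D // i ∈ α} => n).image
      fun p => fun i : Fin D => if h : i ∈ α then p.2 ⟨i, h⟩ else p.1 ⟨i, h⟩

/-- The support of a set-polynomial: the union of all coordinates of all points
of all its coefficients. -/
def supp [DecidableEq S] (P : SetPolynomial S D) : Finset S :=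
  Finset.univ.biUnion fun α : Finset (Fin D) =>
    (P.coeff α).biUnion fun f => Finset.image f Finset.univ

/-- The degree of a set-polynomial: the largest `|α|` with `P_α ≠ ∅` (and `0` for the
empty set-polynomial). -/
def deg (P : SetPolynomial S D) : ℕ :=
  (Finset.univ.filter fun α : Finset (Fin D) => (P.coeff α).Nonempty).sup Finset.card

/-- `Q` is dominated by `P` : coefficient-wise containment. -/
def Dominated (Q P : SetPolynomial S D) : Prop := ∀ α, Q.coeff α ⊆ P.coeff α

/-- The difference of set-polynomials: coefficient-wise set difference. -/
def sub [DecidableEq S] (P Q : SetPolynomial S D) : SetPolynomial S D :=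
  ⟨fun α => P.coeff α \ Q.coeff α⟩

/-- Equivalence of set-polynomials: the same degree and the same leading coefficients. -/
def Equiv (P P' : SetPolynomial S D) : Prop :=
  P.deg = P'.deg ∧ ∀ α : Finset (Fin D), α.card = P.deg → P.coeff α = P'.coeff α

end SetPolynomial

/-! A point of `P(n)` has each coordinate either in `n` (the free coordinates `α`) or in a
coefficient of `P`; if all its coordinates also lie in `s`, the free ones lie in `s ∩ n`.
With `s` the coordinates of `Q(m)`, which lie in `supp Q ∪ m`, and `n` disjoint from `supp Q`,
the free coordinates of a point of `P(n) ∩ Q(m)` lie in `n ∩ m`. -/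

namespace SetPolynomial

variable {S : Type*} [DecidableEq S] {D : ℕ}

def coordSupp {ι : Type*} [Fintype ι] (a : Finset (ι → S)) : Finset S :=
  a.biUnion fun x => Finset.image x Finset.univ

theorem coordSupp_subset_iff {ι : Type*} [Fintype ι] {a : Finset (ι → S)} {s : Finset S} :
    coordSupp a ⊆ s ↔ ∀ x ∈ a, ∀ i, x i ∈ s := by
  simp only [coordSupp, Finset.biUnion_subset, Finset.image_subset_iff, Finset.mem_univ,
    true_implies]

theorem apply_mem_coordSupp {ι : Type*} [Fintype ι] {a : Finset (ι → S)} {x : ι → S}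
    (hx : x ∈ a) (i : ι) : x i ∈ coordSupp a :=
  coordSupp_subset_iff.mp subset_rfl x hx i

theorem apply_mem_supp {P : SetPolynomial S D} {α : Finset (Fin D)} {c} (hc : c ∈ P.coeff α)
    (j : {i : Fin D // i ∉ α}) : c j ∈ P.supp :=
  Finset.mem_biUnion.mpr ⟨α, Finset.mem_univ _, apply_mem_coordSupp hc j⟩

theorem mem_eval {P : SetPolynomial S D} {n : Finset S} {x : Fin D → S} :
    x ∈ P.eval n ↔ ∃ α, ∃ c ∈ P.coeff α,
      (∀ i (hi : i ∉ α), x i = c ⟨i, hi⟩) ∧ ∀ i ∈ α, x i ∈ n := by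
  simp only [eval, Finset.mem_biUnion, Finset.mem_univ, true_and, Finset.mem_image,
    Finset.mem_product, Fintype.mem_piFinset, Prod.exists]
  constructor
  · rintro ⟨α, c, f, ⟨hc, hf⟩, rfl⟩
    exact ⟨α, c, hc, fun i hi => by simp [hi], fun i hi => by simpa [hi] using hf ⟨i, hi⟩⟩
  · rintro ⟨α, c, hc, hfixed, hfree⟩
    refine ⟨α, c, fun i => x i, ⟨hc, fun i => hfree i i.2⟩, funext fun i => ?_⟩
    by_cases hi : i ∈ α
    · simp [hi]
    · simp [hi, hfixed i hi]

theorem eval_mono (P : SetPolynomial S D) {n n' : Finset S} (h : n ⊆ n') :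
    P.eval n ⊆ P.eval n' := fun _ hx =>
  let ⟨α, c, hc, hfixed, hfree⟩ := mem_eval.mp hx
  mem_eval.mpr ⟨α, c, hc, hfixed, fun i hi => h (hfree i hi)⟩

theorem coordSupp_eval_subset (P : SetPolynomial S D) (n : Finset S) :
    coordSupp (P.eval n) ⊆ P.supp ∪ n := by
  refine coordSupp_subset_iff.mpr fun x hx i => ?_
  obtain ⟨α, c, hc, hfixed, hfree⟩ := mem_eval.mp hx
  by_cases hi : i ∈ α
  · exact Finset.mem_union_right _ (hfree i hi)
  · exact Finset.mem_union_left _ (hfixed i hi ▸ apply_mem_supp hc _)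

theorem inter_eval_subset (P : SetPolynomial S D) (a : Finset (Fin D → S)) (n : Finset S) :
    a ∩ P.eval n ⊆ P.eval (coordSupp a ∩ n) := fun _ hx =>
  let ⟨hxa, hxP⟩ := Finset.mem_inter.mp hx
  let ⟨α, c, hc, hfixed, hfree⟩ := mem_eval.mp hxP
  mem_eval.mpr ⟨α, c, hc, hfixed, fun i hi =>
    Finset.mem_inter.mpr ⟨apply_mem_coordSupp hxa i, hfree i hi⟩⟩

end SetPolynomial

open SetPolynomial in
theorem setPolynomial_inter_subset_general {S : Type*} [DecidableEq S] {D : ℕ}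
    (P Q : SetPolynomial S D) (n m : Finset S) (h : Disjoint n Q.supp) :
    P.eval n ∩ Q.eval m ⊆ P.eval (n ∩ m) := by
  have hcoord : coordSupp (Q.eval m) ∩ n ⊆ n ∩ m := by
    intro y hy
    obtain ⟨hyQ, hyn⟩ := Finset.mem_inter.mp hy
    rcases Finset.mem_union.mp (coordSupp_eval_subset Q m hyQ) with hsupp | hym
    · exact absurd hsupp (Finset.disjoint_left.mp h hyn)
    · exact Finset.mem_inter.mpr ⟨hyn, hym⟩
  calc P.eval n ∩ Q.eval m = Q.eval m ∩ P.eval n := Finset.inter_comm _ _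
    _ ⊆ P.eval (coordSupp (Q.eval m) ∩ n) := inter_eval_subset P _ n
    _ ⊆ P.eval (n ∩ m) := P.eval_mono hcoord

/-- Lemma 2.7 (6): if `n` is disjoint from `supp Q`, then
`P(n) ∩ Q(m) ⊆ P(n ∩ m)` for all finite `m`. -/
theorem setPolynomial_inter_subset {S : Type*} [DecidableEq S] {D : ℕ} (hD : 1 ≤ D)
    (P Q : SetPolynomial S D) (n m : Finset S) (h : Disjoint n Q.supp) :
    P.eval n ∩ Q.eval m ⊆ P.eval (n ∩ m) :=
  setPolynomial_inter_subset_general P Q n m h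
end

section
/- Assume the polynomial Hales–Jewett theorem (as in the paper). Let G be a commutative group and p : G → G a polynomial mapping (in the sense that some finite iterate of difference operators D_a f(b) = f(a+b) − f(b) annihilates it) with p(0) = 0. Then for every finite coloring of G and every sequence (g_j) in G there exist h ∈ G and a nonempty finite γ ⊆ ℕ such that h and h + p(Σ_{j∈γ} g_j) have the same color. -/
/-- Iterated difference operators: `itDiff [a₁,…,a_k] f` is `D_{a_k} ⋯ D_{a_1} f`, where
`(D_a f)(b) = f(a+b) − f(b)`. -/
def itDiff {G : Type*} [AddCommGroup G] : List G → (G → G) → (G → G)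
  | [], f => f
  | a :: l, f => itDiff l (fun b => f (a + b) - f b)

/-- `f : G → G` is a polynomial mapping if some finite iterate of difference operators
annihilates it. -/
def IsPolynomialMap {G : Type*} [AddCommGroup G] (f : G → G) : Prop :=
  ∃ d : ℕ, ∀ l : List G, l.length = d → itDiff l f = fun _ => 0

/-!
Newton expansion along the sequence gives `p (∑ j ∈ γ, g j) = ∑ β ⊆ γ, c β` with
`c β = D_{g_{j_k}} ⋯ D_{g_{j_1}} p 0` for `β = {j_1 < ⋯ < j_k}`; here `c ∅ = p 0 = 0` and
`c β = 0` once `|β| ≥ d`. Every nonempty `β` with `|β| ≤ d` is the set of values of some vector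
in `ℕ^d`, so putting the weight `c β` on one such vector makes the total weight of the cube `γ^d`
equal to `p (∑ j ∈ γ, g j)`. Colour a finite set of points by the colour of its total weight: PHJ
with `q = 1` yields `a` and `γ` such that `a` and `a ∪ γ^d × {1}` (disjointly) have the same
colour, and `h := weight a` works.
-/

open Finset Function

section Difference

variable {G : Type*} [AddCommGroup G]

theorem itDiff_append (l₁ l₂ : List G) (f : G → G) :
    itDiff (l₁ ++ l₂) f = itDiff l₂ (itDiff l₁ f) := by
  induction l₁ generalizing f with
  | nil => rfl
  | cons a l ih => exact ih _

theorem itDiff_zero (l : List G) : itDiff l (fun _ => (0 : G)) = fun _ => 0 := by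
  induction l with
  | nil => rfl
  | cons a l ih => simpa [itDiff] using ih

theorem itDiff_eq_of_perm {l l' : List G} (h : l.Perm l') (f : G → G) :
    itDiff l f = itDiff l' f := by
  induction h generalizing f with
  | nil => rfl
  | cons a _ ih => exact ih _
  | swap a b l =>
    refine congrArg (itDiff l) (funext fun x => ?_)
    simp only [add_left_comm a b]
    abel
  | trans _ _ ih₁ ih₂ => rw [ih₁, ih₂]

theorem IsPolynomialMap.itDiff_eq_zero {f : G → G} (hf : IsPolynomialMap f) :
    ∃ d, ∀ l : List G, d ≤ l.length → itDiff l f = fun _ => 0 := by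
  obtain ⟨d, hd⟩ := hf
  refine ⟨d, fun l hl => ?_⟩
  rw [← List.take_append_drop d l, itDiff_append, hd _ (by simpa using hl), itDiff_zero]

def diffCoeff (g : ℕ → G) (f : G → G) (β : Finset ℕ) : G :=
  itDiff ((β.sort (· ≤ ·)).map g) f 0

theorem diffCoeff_empty (g : ℕ → G) (f : G → G) : diffCoeff g f ∅ = f 0 := by
  simp [diffCoeff, itDiff]

theorem diffCoeff_insert (g : ℕ → G) (f : G → G) {k : ℕ} {β : Finset ℕ} (hk : k ∉ β) :
    diffCoeff g f (insert k β) = diffCoeff g (fun b => f (g k + b) - f b) β := by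
  have hperm : (((insert k β).sort (· ≤ ·)).map g).Perm (g k :: (β.sort (· ≤ ·)).map g) :=
    ((sort_perm_toList _ _).trans
      ((toList_insert hk).trans ((sort_perm_toList _ _).symm.cons k))).map g
  rw [diffCoeff, itDiff_eq_of_perm hperm]
  rfl

theorem apply_sum_eq_sum_powerset_diffCoeff (g : ℕ → G) (γ : Finset ℕ) (f : G → G) :
    f (∑ j ∈ γ, g j) = ∑ β ∈ γ.powerset, diffCoeff g f β := by
  induction γ using Finset.induction_on generalizing f with
  | empty => simp [diffCoeff, itDiff]
  | @insert k γ hk ih =>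
    have hins : ∀ β ∈ γ.powerset, diffCoeff g f (insert k β) =
        diffCoeff g (fun b => f (g k + b) - f b) β :=
      fun β hβ => diffCoeff_insert g f fun hkβ => hk (mem_powerset.1 hβ hkβ)
    rw [sum_insert hk, sum_powerset_insert hk, sum_congr rfl hins, ← ih, ← ih]
    abel

theorem IsPolynomialMap.diffCoeff_eq_zero {f : G → G} (hf : IsPolynomialMap f) (g : ℕ → G) :
    ∃ d, ∀ β : Finset ℕ, d ≤ β.card → diffCoeff g f β = 0 := by
  obtain ⟨d, hd⟩ := hf.itDiff_eq_zero
  exact ⟨d, fun β hβ => congrFun (hd _ (by simpa using hβ)) 0⟩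

end Difference

theorem Finset.sum_ite_invFun_eq_sum_image {X Y M : Type*} [Nonempty X] [DecidableEq X]
    [DecidableEq Y] [AddCommMonoid M] (π : X → Y) {s : Finset X}
    (hs : ∀ x ∈ s, invFun π (π x) ∈ s) (c : Y → M) :
    ∑ x ∈ s, (if invFun π (π x) = x then c (π x) else 0) = ∑ y ∈ s.image π, c y := by
  have himage : (s.filter fun x => invFun π (π x) = x).image π = s.image π := by
    refine (image_subset_image (filter_subset _ _)).antisymm fun y hy => ?_
    obtain ⟨x, hx, rfl⟩ := mem_image.1 hy
    have hπ : π (invFun π (π x)) = π x := invFun_eq ⟨x, rfl⟩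
    exact mem_image.2 ⟨_, mem_filter.2 ⟨hs x hx, by rw [hπ]⟩, hπ⟩
  rw [← sum_filter, ← himage, sum_image]
  intro x hx x' hx' hxx'
  rw [← (mem_filter.1 hx).2, ← (mem_filter.1 hx').2, hxx']

theorem Finset.exists_image_univ_eq {ι α : Type*} [Fintype ι] [DecidableEq α] {β : Finset α}
    (hβ : β.Nonempty) (hcard : β.card ≤ Fintype.card ι) : ∃ v : ι → α, univ.image v = β := by
  obtain ⟨e⟩ : Nonempty (β ↪ ι) := Function.Embedding.nonempty_of_card_le (by simpa using hcard)
  have : Nonempty β := hβ.to_subtype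
  refine ⟨fun i => ((invFun e i : β) : α), Finset.ext fun x => ⟨?_, fun hx => ?_⟩⟩
  · rintro hx
    obtain ⟨i, -, rfl⟩ := mem_image.1 hx
    exact (invFun e i).2
  · exact mem_image.2 ⟨e ⟨x, hx⟩, mem_univ _, by rw [leftInverse_invFun e.injective]⟩

section RangeWeight

variable {ι α M : Type*} [Fintype ι] [Nonempty α] [DecidableEq α]
  [AddCommMonoid M]

/-- Puts the weight `c β` on a single chosen vector `v : ι → α` whose set of values is `β`. -/
noncomputable def rangeWeight (c : Finset α → M) (v : ι → α) : M :=
  if invFun (fun w : ι → α => univ.image w) (univ.image v) = v then c (univ.image v) else 0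

theorem sum_piFinset_rangeWeight [DecidableEq ι] (c : Finset α → M) (hc₀ : c ∅ = 0)
    (hc : ∀ β : Finset α, Fintype.card ι < β.card → c β = 0) (γ : Finset α) :
    ∑ v ∈ Fintype.piFinset (fun _ : ι => γ), rangeWeight c v = ∑ β ∈ γ.powerset, c β := by
  set π : (ι → α) → Finset α := fun w => univ.image w
  have hmem : ∀ w, w ∈ Fintype.piFinset (fun _ : ι => γ) ↔ π w ⊆ γ := by
    simp [π, image_subset_iff]
  have hrepr : ∀ v ∈ Fintype.piFinset (fun _ : ι => γ), invFun π (π v) ∈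
      Fintype.piFinset (fun _ : ι => γ) := by
    intro v hv
    rw [hmem, invFun_eq (f := π) ⟨v, rfl⟩]
    exact (hmem v).1 hv
  change ∑ v ∈ _, (if invFun π (π v) = v then c (π v) else 0) = _
  rw [sum_ite_invFun_eq_sum_image π hrepr]
  refine sum_subset (fun β hβ => ?_) fun β hβγ hβ => ?_
  · obtain ⟨v, hv, rfl⟩ := mem_image.1 hβ
    exact mem_powerset.2 ((hmem v).1 hv)
  · obtain rfl | hne := β.eq_empty_or_nonempty
    · exact hc₀
    refine hc β (not_le.1 fun hcard => hβ ?_)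
    obtain ⟨v, hv⟩ := exists_image_univ_eq hne hcard
    exact mem_image.2 ⟨v, (hmem v).2 (by rw [← hv] at hβγ; exact mem_powerset.1 hβγ), hv⟩

end RangeWeight

/-- Assuming the polynomial Hales–Jewett theorem: for any commutative group `G`, any
polynomial mapping `p : G → G` with `p(0) = 0`, any finite coloring of `G` and any
sequence `(g_j)` in `G`, there are `h ∈ G` and a nonempty finite `γ ⊆ ℕ` with `h` and
`h + p(Σ_{j∈γ} g_j)` of the same color. -/
theorem PHJ_implies_polynomial_IP_recurrence
    (PHJ : ∀ r d q : ℕ, ∃ N : ℕ, ∀ χ : Finset ((Fin d → ℕ) × ℕ) → Fin r,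
      ∃ (a : Finset ((Fin d → ℕ) × ℕ)) (γ : Finset ℕ),
        γ.Nonempty ∧ γ ⊆ Finset.Icc 1 N ∧
        a ⊆ (Fintype.piFinset fun _ : Fin d => Finset.Icc 1 N) ×ˢ Finset.Icc 1 q ∧
        Disjoint a ((Fintype.piFinset fun _ : Fin d => γ) ×ˢ Finset.Icc 1 q) ∧
        ∀ i ∈ Finset.Icc 1 q,
          χ (a ∪ (Fintype.piFinset fun _ : Fin d => γ) ×ˢ {i}) = χ a)
    {G : Type*} [AddCommGroup G] (p : G → G) (hp : IsPolynomialMap p) (hp0 : p 0 = 0) :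
    ∀ (r : ℕ) (χ : G → Fin r) (g : ℕ → G),
      ∃ (h : G) (γ : Finset ℕ), γ.Nonempty ∧ χ (h + p (∑ j ∈ γ, g j)) = χ h := by
  intro r χ g
  obtain ⟨d, hd⟩ := hp.diffCoeff_eq_zero g
  -- Only the first coordinate matters, since PHJ is applied with `q = 1`.
  let weight : Finset ((Fin d → ℕ) × ℕ) → G := fun A => ∑ x ∈ A, rangeWeight (diffCoeff g p) x.1
  obtain ⟨N, hN⟩ := PHJ r d 1
  obtain ⟨a, γ, hγ, -, -, hdisj, hcolor⟩ := hN (χ ∘ weight)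
  have hcube : weight ((Fintype.piFinset fun _ : Fin d => γ) ×ˢ {1}) = p (∑ j ∈ γ, g j) := by
    simp only [weight, sum_product, sum_singleton]
    rw [sum_piFinset_rangeWeight _ (by rwa [diffCoeff_empty])
      (fun β hβ => hd β (by simpa using hβ.le)), ← apply_sum_eq_sum_powerset_diffCoeff]
  refine ⟨weight a, γ, hγ, ?_⟩
  rw [← hcube, ← sum_union (by simpa using hdisj)]
  exact hcolor 1 (by simp)
end

section
/- Let G be a commutative monoid with zero, S an infinite linearly ordered set, d ≥ 1, and embed the nonempty subsets of S of size ≤ d into S^d by sending {s₁ < ⋯ < s_k} to (s₁,…,s_k, s_k,…,s_k). Then for every finite n ⊆ S, the image under this embedding of {a ⊆ n : 1 ≤ |a| ≤ d} equals n^d ∩ (image of all nonempty sets of size ≤ d). Consequently every polynomial mapping P : Finset S → G of degree ≤ d with P(∅) = 0 factors as P = φ ∘ 𝒫^d, where 𝒫^d(n) = n^d ∈ Finset(S^d) and φ : Finset(S^d) → G is additive over disjoint unions with φ(∅) = 0. -/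
/-- The embedding of nonempty subsets `{s₁ < ⋯ < s_k}` of size `≤ d` into `S^d`,
`{s₁ < ⋯ < s_k} ↦ (s₁, …, s_k, s_k, …, s_k)`. -/
noncomputable def emb {S : Type*} [LinearOrder S] [Nonempty S] (d : ℕ) (a : Finset S) :
    Fin d → S :=
  fun i => (a.sort (· ≤ ·)).getD (min i.1 (a.card - 1)) (Classical.arbitrary S)

open Finset

section Embedding

variable {S : Type*} [LinearOrder S] [Nonempty S] {d : ℕ} {a : Finset S}

lemma emb_mem (ha : 1 ≤ a.card) (i : Fin d) : emb d a i ∈ a := by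
  have hi : min i.1 (a.card - 1) < (a.sort (· ≤ ·)).length := by
    rw [length_sort]; omega
  rw [emb, List.getD_eq_getElem _ _ hi, ← mem_sort (· ≤ ·)]
  exact List.getElem_mem hi

lemma image_univ_emb (ha : 1 ≤ a.card) (had : a.card ≤ d) : univ.image (emb d a) = a := by
  refine Subset.antisymm (fun x hx => ?_) (fun x hx => ?_)
  · obtain ⟨i, -, rfl⟩ := mem_image.mp hx
    exact emb_mem ha i
  · obtain ⟨j, hj, rfl⟩ := List.mem_iff_getElem.mp ((mem_sort (· ≤ ·)).mpr hx)
    rw [length_sort] at hj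
    refine mem_image.mpr ⟨⟨j, hj.trans_le had⟩, mem_univ _, ?_⟩
    rw [emb, min_eq_left (by omega : j ≤ a.card - 1), List.getD_eq_getElem]

lemma emb_injOn : Set.InjOn (emb (S := S) d) {a | 1 ≤ a.card ∧ a.card ≤ d} :=
  fun a ha b hb hab => by
    rw [← image_univ_emb ha.1 ha.2, ← image_univ_emb hb.1 hb.2, hab]

lemma coe_image_emb_powerset_filter (n : Finset S) :
    ((n.powerset.filter fun a => 1 ≤ a.card ∧ a.card ≤ d).image (emb d) : Set (Fin d → S)) =
      ↑(Fintype.piFinset fun _ : Fin d => n) ∩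
        {f | ∃ a : Finset S, 1 ≤ a.card ∧ a.card ≤ d ∧ f = emb d a} := by
  ext f
  simp only [coe_image, coe_filter, mem_powerset, Set.mem_image, Set.mem_ofPred_eq,
    Set.mem_inter_iff, mem_coe, Fintype.mem_piFinset]
  constructor
  · rintro ⟨a, ⟨han, ha, had⟩, rfl⟩
    exact ⟨fun i => han (emb_mem ha i), a, ha, had, rfl⟩
  · rintro ⟨hfn, a, ha, had, rfl⟩
    refine ⟨a, ⟨fun x hx => ?_, ha, had⟩, rfl⟩
    rw [← image_univ_emb ha had] at hx
    obtain ⟨i, -, rfl⟩ := mem_image.mp hx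
    exact hfn i

lemma sum_piFinset_eq_sum_emb {G : Type*} [AddCommMonoid G] {w : (Fin d → S) → G}
    (hw : ∀ f, (∀ a : Finset S, 1 ≤ a.card → a.card ≤ d → f ≠ emb d a) → w f = 0)
    (n : Finset S) :
    ∑ f ∈ Fintype.piFinset (fun _ : Fin d => n), w f =
      ∑ a ∈ n.powerset.filter (fun a => 1 ≤ a.card ∧ a.card ≤ d), w (emb d a) := by
  have h := coe_image_emb_powerset_filter (d := d) n
  calc ∑ f ∈ Fintype.piFinset (fun _ : Fin d => n), w f
      = ∑ f ∈ (n.powerset.filter fun a => 1 ≤ a.card ∧ a.card ≤ d).image (emb d), w f := by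
        refine (sum_subset (fun f hf => ?_) fun f hf hfn => hw f fun a ha had hfa => hfn ?_).symm
        · exact (Set.ext_iff.mp h f |>.mp hf).1
        · exact Set.ext_iff.mp h f |>.mpr ⟨hf, a, ha, had, hfa⟩
    _ = _ := sum_image fun a ha b hb => emb_injOn (mem_filter.mp ha).2 (mem_filter.mp hb).2

end Embedding

section Representation

variable {S : Type*} [LinearOrder S] {G : Type*}

noncomputable def glueAtMin (c : G) (ψ : S → Finset S → G) (a : Finset S) : G :=
  if h : a.Nonempty then ψ (a.min' h) (a.erase (a.min' h)) else c

lemma glueAtMin_empty (c : G) (ψ : S → Finset S → G) : glueAtMin c ψ ∅ = c := by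
  simp [glueAtMin]

lemma glueAtMin_insert (c : G) (ψ : S → Finset S → G) {s : S} {b : Finset S}
    (hs : ∀ x ∈ b, s < x) : glueAtMin c ψ (insert s b) = ψ s b := by
  have hmin : (insert s b).min' (insert_nonempty s b) = s :=
    le_antisymm (min'_le _ _ (mem_insert_self s b))
      (le_min' _ _ _ fun y hy => (mem_insert.mp hy).elim ge_of_eq fun hy => (hs y hy).le)
  rw [glueAtMin, dif_pos (insert_nonempty s b), hmin,
    erase_insert fun h => lt_irrefl s (hs s h)]

lemma glueAtMin_eq_zero [Zero G] (c : G) {ψ : S → Finset S → G} {d : ℕ}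
    (hψ : ∀ s b, d < b.card → ψ s b = 0) {a : Finset S} (ha : d + 1 < a.card) :
    glueAtMin c ψ a = 0 := by
  have hne : a.Nonempty := card_pos.mp (by omega)
  rw [glueAtMin, dif_pos hne]
  exact hψ _ _ (by rw [card_erase_of_mem (min'_mem a hne)]; omega)

lemma eq_sum_powerset_glueAtMin [AddCommMonoid G] {P : Finset S → G} {U : Set S}
    {ψ : S → Finset S → G}
    (hP : ∀ s ∈ U, ∀ n : Finset S, ↑n ⊆ U → s ∉ n →
      P (insert s n) = P n + ∑ b ∈ n.powerset, ψ s b)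
    (n : Finset S) (hn : ↑n ⊆ U) : P n = ∑ a ∈ n.powerset, glueAtMin (P ∅) ψ a := by
  induction n using Finset.induction_on_min with
  | empty => simp [glueAtMin_empty]
  | insert s n hs ih =>
    have hsn : s ∉ n := fun h => lt_irrefl s (hs s h)
    have hnU : ↑n ⊆ U := (coe_subset.mpr (subset_insert s n)).trans hn
    rw [hP s (hn (mem_insert_self s n)) n hnU hsn, ih hnU, sum_powerset_insert hsn]
    congr 1
    refine sum_congr rfl fun b hb => (glueAtMin_insert _ _ fun x hx => hs x ?_).symm
    exact mem_powerset.mp hb hx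

theorem PolyOn.exists_sum_powerset [AddCommMonoid G] :
    ∀ {d : ℕ} {P : Finset S → G} {U : Set S}, PolyOn d P U →
      ∃ φ : Finset S → G, (∀ a, d < a.card → φ a = 0) ∧
        ∀ n : Finset S, ↑n ⊆ U → P n = ∑ a ∈ n.powerset, φ a
  | 0, P, U, hP => by
    refine ⟨Pi.single ∅ (P ∅), fun a ha => Pi.single_eq_of_ne (card_pos.mp ha).ne_empty _,
      fun n hn => ?_⟩
    rw [sum_pi_single', if_pos (empty_mem_powerset n)]
    exact hP n ∅ hn (by simp)
  | d + 1, P, U, hP => by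
    have key : ∀ s, ∃ ψ : Finset S → G, (∀ b, d < b.card → ψ b = 0) ∧
        (s ∈ U → ∀ n : Finset S, ↑n ⊆ U → s ∉ n →
          P (insert s n) = P n + ∑ b ∈ n.powerset, ψ b) := by
      intro s
      by_cases hs : s ∈ U
      · obtain ⟨Q, hQ, hPQ⟩ := hP {s} (by simpa using hs)
        obtain ⟨ψ, hψ, hQψ⟩ := hQ.exists_sum_powerset
        refine ⟨ψ, hψ, fun _ n hn hsn => ?_⟩
        rw [insert_eq, union_comm, hPQ n hn (disjoint_singleton_right.mpr hsn),
          hQψ n (Set.subset_sdiff.mpr ⟨hn, by simpa using hsn⟩)]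
      · exact ⟨0, fun _ _ => rfl, fun h => absurd h hs⟩
    choose ψ hψ hPψ using key
    exact ⟨glueAtMin (P ∅) ψ, fun a => glueAtMin_eq_zero _ hψ, eq_sum_powerset_glueAtMin hPψ⟩

end Representation

theorem universal_polynomial_and_factorization_general {S : Type*} [LinearOrder S] [Infinite S]
    {G : Type*} [AddCommMonoid G] (d : ℕ) :
    (∀ n : Finset S,
      ((((n.powerset.filter fun a => 1 ≤ a.card ∧ a.card ≤ d).image (emb d)) :
          Finset (Fin d → S)) : Set (Fin d → S)) =
        ↑(Fintype.piFinset fun _ : Fin d => n) ∩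
          {f : Fin d → S | ∃ a : Finset S, 1 ≤ a.card ∧ a.card ≤ d ∧ f = emb d a}) ∧
    (∀ P : Finset S → G, PolyOn d P Set.univ → P ∅ = 0 →
      ∃ φ : Finset (Fin d → S) → G,
        φ ∅ = 0 ∧
        (∀ a b : Finset (Fin d → S), Disjoint a b → φ (a ∪ b) = φ a + φ b) ∧
        ∀ n : Finset S, P n = φ (Fintype.piFinset fun _ : Fin d => n)) := by
  classical
  refine ⟨coe_image_emb_powerset_filter, fun P hP hP0 => ?_⟩
  obtain ⟨φ₀, hφ₀d, hPφ₀⟩ := hP.exists_sum_powerset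
  have hφ₀ : φ₀ ∅ = 0 := by simpa [hP0] using (hPφ₀ ∅ (Set.subset_univ _)).symm
  -- `univ.image f` recovers `a` from `f = emb d a`
  let w : (Fin d → S) → G := fun f =>
    if ∃ a : Finset S, 1 ≤ a.card ∧ a.card ≤ d ∧ f = emb d a then φ₀ (univ.image f) else 0
  have hw : ∀ f, (∀ a : Finset S, 1 ≤ a.card → a.card ≤ d → f ≠ emb d a) → w f = 0 :=
    fun f hf => if_neg fun ⟨a, ha, had, hfa⟩ => hf a ha had hfa
  refine ⟨fun A => ∑ f ∈ A, w f, sum_empty, fun A B hAB => sum_union hAB, fun n => ?_⟩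
  calc P n = ∑ a ∈ n.powerset, φ₀ a := hPφ₀ n (Set.subset_univ _)
    _ = ∑ a ∈ n.powerset.filter (fun a => 1 ≤ a.card ∧ a.card ≤ d), φ₀ a := by
      refine (sum_filter_of_ne fun a _ ha => ⟨?_, ?_⟩).symm
      · exact card_pos.mpr (nonempty_iff_ne_empty.mpr fun h => ha (h ▸ hφ₀))
      · exact not_lt.mp fun h => ha (hφ₀d a h)
    _ = ∑ a ∈ n.powerset.filter (fun a => 1 ≤ a.card ∧ a.card ≤ d), w (emb d a) := by
      refine sum_congr rfl fun a ha => ?_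
      obtain ⟨ha, had⟩ := (mem_filter.mp ha).2
      rw [show w (emb d a) = φ₀ (univ.image (emb d a)) from if_pos ⟨a, ha, had, rfl⟩,
        image_univ_emb ha had]
    _ = ∑ f ∈ Fintype.piFinset (fun _ : Fin d => n), w f := (sum_piFinset_eq_sum_emb hw n).symm

/-- Section 8.5: via the embedding `emb`, the universal polynomial
`𝒫^{(d)}(n) = {a ⊆ n : 1 ≤ |a| ≤ d}` is identified with a sub-configuration of the cube
map `𝒫^d(n) = n^d`. Consequently, every polynomial mapping `P : Finset S → G` of degree
`≤ d` with `P(∅) = 0` factors as `P = φ ∘ 𝒫^d` with `φ` additive over disjoint unions. -/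
theorem universal_polynomial_and_factorization {S : Type*} [LinearOrder S] [Infinite S]
    {G : Type*} [AddCommMonoid G] (d : ℕ) (hd : 1 ≤ d) :
    (∀ n : Finset S,
      ((((n.powerset.filter fun a => 1 ≤ a.card ∧ a.card ≤ d).image (emb d)) :
          Finset (Fin d → S)) : Set (Fin d → S)) =
        ↑(Fintype.piFinset fun _ : Fin d => n) ∩
          {f : Fin d → S | ∃ a : Finset S, 1 ≤ a.card ∧ a.card ≤ d ∧ f = emb d a}) ∧
    (∀ P : Finset S → G, PolyOn d P Set.univ → P ∅ = 0 →
      ∃ φ : Finset (Fin d → S) → G,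
        φ ∅ = 0 ∧
        (∀ a b : Finset (Fin d → S), Disjoint a b → φ (a ∪ b) = φ a + φ b) ∧
        ∀ n : Finset S, P n = φ (Fintype.piFinset fun _ : Fin d => n)) :=
  universal_polynomial_and_factorization_general d
end
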